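/- There exists NO constant A > 0 such that for all τ > 0 and all x ∈ R⁴ \ {0}, |E_τ(x)| ≤ A/|x|², where E_τ(x) = (1/(2π|x|²))(cos(τr) − x₁ sin(τr)/r) with r = |x'|. -/

import Mathlib

/-- The explicit 4-dimensional fundamental solution of the conjugated Laplacian,
`E_τ(x) = (1/(2π|x|²)) (cos(τr) − x₁ sin(τr)/r)` with `x = (x₁,x') ∈ ℝ × ℝ³`, `r = |x'|`. -/
noncomputable def Efour (τ x₁ : ℝ) (x' : EuclideanSpace ℝ (Fin 3)) : ℝ :=
  (1 / (2 * Real.pi * (x₁ ^ 2 + ‖x'‖ ^ 2))) *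
    (Real.cos (τ * ‖x'‖) - x₁ * Real.sin (τ * ‖x'‖) / ‖x'‖)

/-! On the sphere `τ r = π/2` the cosine term vanishes and `E_τ(x) = -x₁ / (2π r |x|²)`, so
`|x|² |E_τ(x)| = |x₁| / (2π r)` grows linearly in `x₁`: no constant `A` can bound it. -/

open Real

theorem Efour_of_mul_norm_eq_pi_div_two {τ : ℝ} (x₁ : ℝ) {x' : EuclideanSpace ℝ (Fin 3)}
    (hτ : τ * ‖x'‖ = π / 2) :
    Efour τ x₁ x' = -(x₁ / ‖x'‖) / (2 * π * (x₁ ^ 2 + ‖x'‖ ^ 2)) := by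
  rw [Efour, hτ, cos_pi_div_two, sin_pi_div_two]
  ring

theorem abs_Efour_pi_div_two_of_norm_eq_one (x₁ : ℝ) {x' : EuclideanSpace ℝ (Fin 3)}
    (hx' : ‖x'‖ = 1) :
    |Efour (π / 2) x₁ x'| = |x₁| / (2 * π * (x₁ ^ 2 + 1)) := by
  rw [Efour_of_mul_norm_eq_pi_div_two x₁ (by rw [hx', mul_one]), hx', div_one, one_pow,
    abs_div, abs_neg, abs_of_pos (by positivity : 0 < 2 * π * (x₁ ^ 2 + 1))]

/-- There is NO constant `A > 0` such that `|E_τ(x)| ≤ A/|x|²` for all `τ > 0` and all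
nonzero `x ∈ ℝ⁴`. -/
theorem no_uniform_pointwise_bound_dim_four :
    ¬ ∃ A : ℝ, 0 < A ∧ ∀ τ : ℝ, 0 < τ → ∀ (x₁ : ℝ) (x' : EuclideanSpace ℝ (Fin 3)),
      (x₁ ≠ 0 ∨ x' ≠ 0) → |Efour τ x₁ x'| ≤ A / (x₁ ^ 2 + ‖x'‖ ^ 2) := by
  rintro ⟨A, hA, hbound⟩
  set x₁ : ℝ := 2 * π * A + 1
  have hx₁ : 0 < x₁ := by positivity
  have hnorm : ‖(EuclideanSpace.single 0 1 : EuclideanSpace ℝ (Fin 3))‖ = 1 := by simp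
  have h := hbound (π / 2) (by positivity) x₁ (EuclideanSpace.single 0 1) (Or.inl hx₁.ne')
  rw [abs_Efour_pi_div_two_of_norm_eq_one x₁ hnorm, abs_of_pos hx₁, hnorm, one_pow,
    div_le_div_iff₀ (by positivity) (by positivity)] at h
  have : x₁ ≤ 2 * π * A := le_of_mul_le_mul_right (by linarith) (by positivity : 0 < x₁ ^ 2 + 1)
  linarith
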